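/- arXiv:1308.0838 — 2 statements merged into one kernel-verified Lean document; each statement's English description precedes it below -/
import Mathlib

section
/- For every C > 0 and every ε > 0 there is a constant C' > 0, independent of the field F, such that for every integer n ≥ 1 the number of elements x ∈ O_F with |N_{F/ℚ}(x)| = n and |σ(x)| ≤ C·n^{1/3} for every field embedding σ : F → ℂ is at most C'·n^{ε}. -/
/-!
If `x` is counted, its conjugates are at most `C n^{1/3}` in size and their product is `n`,
so none of them is much smaller either. Hence if `x` and `y` generate the same ideal, `y / x`
is an algebraic integer all of whose conjugates are bounded by `C³`; its minimal polynomial then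
has degree at most `3` and bounded integer coefficients, so there are boundedly many such
quotients, uniformly in `F`. The ideals `(x)` have norm `n`, and an ideal of norm `n` is
determined by the exponents of the at most `3` primes above each `p ∣ n`, each exponent being at
most `v_p(n)`; so there are at most `τ(n)³` of them, and `τ(n) ≪_ε n^ε`.
-/

open Finset Module NumberField Polynomial UniqueFactorizationMonoid

lemma Set.ncard_le_mul_ncard_of_mapsTo {α β : Type*} {f : α → β} {s : Set α} {t : Set β}
    (hs : s.Finite) (ht : t.Finite) (hf : Set.MapsTo f s t) (K : ℕ)
    (hK : ∀ b ∈ t, (s ∩ f ⁻¹' {b}).ncard ≤ K) : s.ncard ≤ K * t.ncard := by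
  classical
  rw [Set.ncard_eq_toFinset_card s hs, Set.ncard_eq_toFinset_card t ht]
  refine card_le_mul_card_image_of_maps_to (fun a ha => by simpa using hf (by simpa using ha)) K
    fun b hb => ?_
  convert hK b (by simpa using hb) using 1
  rw [← Set.ncard_coe_finset]
  congr 1
  ext
  simp

lemma add_one_le_mul_pow_of_one_lt {r : ℝ} (hr : 1 < r) (v : ℕ) :
    (v + 1 : ℝ) ≤ (1 + (r - 1)⁻¹) * r ^ v := by
  have hr' : 0 < r - 1 := by linarith
  have bernoulli : 1 + v * (r - 1) ≤ r ^ v := by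
    simpa using one_add_mul_le_pow (a := r - 1) (by linarith) v
  calc (v + 1 : ℝ) ≤ (1 + (r - 1)⁻¹) * (1 + v * (r - 1)) := by
        field_simp
        nlinarith [mul_nonneg (Nat.cast_nonneg v : (0 : ℝ) ≤ v) (sq_nonneg (r - 1))]
    _ ≤ (1 + (r - 1)⁻¹) * r ^ v := by gcongr

lemma add_one_le_pow_of_two_le {r : ℝ} (hr : 2 ≤ r) (v : ℕ) : (v + 1 : ℝ) ≤ r ^ v := by
  have := one_add_mul_le_pow (a := r - 1) (by linarith) v
  simp only [add_sub_cancel] at this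
  nlinarith [(Nat.cast_nonneg v : (0 : ℝ) ≤ v)]

theorem Nat.exists_card_divisors_le_mul_rpow {ε : ℝ} (hε : 0 < ε) :
    ∃ A > 0, ∀ n : ℕ, (#n.divisors : ℝ) ≤ A * (n : ℝ) ^ ε := by
  set r : ℝ := 2 ^ ε
  have hr : 1 < r := Real.one_lt_rpow (by norm_num) hε
  set A : ℝ := 1 + (r - 1)⁻¹
  have hA : 1 ≤ A := le_add_of_nonneg_right (inv_nonneg.mpr (by linarith))
  set P₀ : ℕ := ⌈(2 : ℝ) ^ ε⁻¹⌉₊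
  -- `v + 1 ≤ (p ^ ε) ^ v` as soon as `p ^ ε ≥ 2`; only the primes below `P₀` cost a factor `A`.
  have local_bound (p : ℕ) (hp : p.Prime) (v : ℕ) :
      (v + 1 : ℝ) ≤ (if p < P₀ then A else 1) * ((p : ℝ) ^ ε) ^ v := by
    have hp2 : (2 : ℝ) ≤ p := by exact_mod_cast hp.two_le
    split_ifs with hsmall
    · calc (v + 1 : ℝ) ≤ A * r ^ v := add_one_le_mul_pow_of_one_lt hr v
        _ ≤ A * ((p : ℝ) ^ ε) ^ v := by gcongr; exact Real.rpow_le_rpow (by norm_num) hp2 hε.le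
    · rw [one_mul]
      refine add_one_le_pow_of_two_le ?_ v
      calc (2 : ℝ) = ((2 : ℝ) ^ ε⁻¹) ^ ε := by
            rw [← Real.rpow_mul (by norm_num), inv_mul_cancel₀ hε.ne', Real.rpow_one]
        _ ≤ (p : ℝ) ^ ε := by
            gcongr
            exact (Nat.le_ceil _).trans (by exact_mod_cast not_lt.mp hsmall)
  refine ⟨A ^ P₀, by positivity, fun n => ?_⟩
  rcases eq_or_ne n 0 with rfl | hn
  · simp [Real.zero_rpow hε.ne']
  have rpow_eq : (n : ℝ) ^ ε = ∏ p ∈ n.primeFactors, ((p : ℝ) ^ ε) ^ n.factorization p := by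
    conv_lhs => rw [← Nat.prod_factorization_pow_eq_self hn]
    rw [Nat.prod_factorization_eq_prod_primeFactors, Nat.cast_prod,
      ← Real.finsetProd_rpow _ _ fun p _ => by positivity]
    exact prod_congr rfl fun p _ => by
      rw [Nat.cast_pow, Real.rpow_pow_comm (Nat.cast_nonneg p)]
  have small_primes : ∏ p ∈ n.primeFactors, (if p < P₀ then A else 1) ≤ A ^ P₀ := by
    rw [← prod_filter, prod_const]
    refine pow_le_pow_right₀ hA ((card_le_card fun p hp => ?_).trans (card_range P₀).le)
    exact mem_range.mpr (mem_filter.mp hp).2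
  calc (#n.divisors : ℝ) = ∏ p ∈ n.primeFactors, ((n.factorization p : ℝ) + 1) := by
        rw [Nat.card_divisors hn]; push_cast; rfl
    _ ≤ ∏ p ∈ n.primeFactors, ((if p < P₀ then A else 1) * ((p : ℝ) ^ ε) ^ n.factorization p) :=
        prod_le_prod (fun _ _ => by positivity)
          fun p hp => local_bound p (Nat.prime_of_mem_primeFactors hp) _
    _ ≤ A ^ P₀ * (n : ℝ) ^ ε := by
        rw [prod_mul_distrib, ← rpow_eq]
        gcongr

namespace Ideal

variable {S : Type*} [CommRing S] [IsDedekindDomain S] [Module.Free ℤ S] [Module.Finite ℤ S]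

lemma minFac_absNorm_prime_and_mem {P : Ideal S} (hP : Prime P) :
    (absNorm P).minFac.Prime ∧ ((absNorm P).minFac : S) ∈ P := by
  have : P.IsMaximal := (isPrime_of_prime hP).isMaximal hP.ne_zero
  obtain ⟨p, k, hk, hpP, hp, hnorm⟩ := exists_prime_and_absNorm_eq_pow P
  rw [hnorm, hp.pow_minFac hk.ne']
  exact ⟨hp, hpP⟩

lemma card_le_finrank_of_minFac_absNorm_eq {T : Finset (Ideal S)} {p : ℕ} (hp : p.Prime)
    (hT : ∀ P ∈ T, Prime P ∧ (absNorm P).minFac = p) : #T ≤ finrank ℤ S := by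
  have prod_dvd : ∏ P ∈ T, P ∣ span {(p : S)} :=
    prod_primes_dvd _ (fun P hP => (hT P hP).1) fun P hP => by
      rw [dvd_span_singleton, ← (hT P hP).2]
      exact (minFac_absNorm_prime_and_mem (hT P hP).1).2
  have : p ^ #T ∣ p ^ finrank ℤ S := by
    rw [← absNorm_span_natCast, ← prod_const]
    refine (prod_dvd_prod_of_dvd (fun _ => p) (fun P => absNorm P) fun P hP => ?_).trans ?_
    · rw [← (hT P hP).2]
      exact Nat.minFac_dvd _
    · rw [← map_prod]
      exact map_dvd absNorm prod_dvd
  exact (Nat.pow_dvd_pow_iff_le_right hp.one_lt).mp this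

lemma count_normalizedFactors_le_factorization (I : Ideal S) {P : Ideal S} (hP : Prime P) :
    (normalizedFactors I).count P ≤ (absNorm I).factorization (absNorm P).minFac := by
  rcases eq_or_ne I ⊥ with rfl | hI
  · rw [← zero_eq_bot, normalizedFactors_zero, Multiset.count_zero]
    exact Nat.zero_le _
  have hpow : P ^ (normalizedFactors I).count P ∣ I := by
    have := Multiset.prod_dvd_prod_of_le
      (Multiset.le_count_iff_replicate_le.mp (le_refl ((normalizedFactors I).count P)))
    rwa [Multiset.prod_replicate, associated_iff_eq.mp (prod_normalizedFactors hI)] at this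
  refine ((minFac_absNorm_prime_and_mem hP).1.pow_dvd_iff_le_factorization
    (absNorm_eq_zero_iff.not.mpr hI)).mp ?_
  exact (pow_dvd_pow_of_dvd (Nat.minFac_dvd _) _).trans (by simpa using map_dvd absNorm hpow)

lemma prod_factorization_minFac_absNorm_add_one_le {n : ℕ} (hn : n ≠ 0) (T : Finset (Ideal S))
    (hT : ∀ P ∈ T, Prime P ∧ P ∣ span {(n : S)}) :
    ∏ P ∈ T, (n.factorization (absNorm P).minFac + 1) ≤ #n.divisors ^ finrank ℤ S := by
  classical
  have maps_to : ∀ P ∈ T, (absNorm P).minFac ∈ n.primeFactors := by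
    intro P hP
    have hp := (minFac_absNorm_prime_and_mem (hT P hP).1).1
    have : (absNorm P).minFac ∣ n ^ finrank ℤ S := by
      rw [← absNorm_span_natCast]
      exact (Nat.minFac_dvd _).trans (map_dvd absNorm (hT P hP).2)
    exact Nat.mem_primeFactors.mpr ⟨hp, hp.dvd_of_dvd_pow this, hn⟩
  rw [Nat.card_divisors hn, ← prod_pow, ← prod_fiberwise_of_maps_to maps_to]
  refine prod_le_prod' fun p hp => ?_
  rw [prod_congr rfl fun P hP => by rw [(mem_filter.mp hP).2], prod_const]
  exact Nat.pow_le_pow_right (Nat.succ_pos _) <| card_le_finrank_of_minFac_absNorm_eq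
    (Nat.prime_of_mem_primeFactors hp) fun P hP =>
      ⟨(hT P (mem_filter.mp hP).1).1, (mem_filter.mp hP).2⟩

theorem ncard_setOf_absNorm_eq_le {n : ℕ} (hn : n ≠ 0) :
    {I : Ideal S | absNorm I = n}.ncard ≤ #n.divisors ^ finrank ℤ S := by
  classical
  set primesDividingN := (normalizedFactors (span {(n : S)})).toFinset
  have hspan : span {(n : S)} ≠ ⊥ := by
    rw [Ne, ← absNorm_eq_zero_iff, absNorm_span_natCast]
    exact pow_ne_zero _ hn
  have ne_bot {I : Ideal S} (hI : absNorm I = n) : I ≠ ⊥ := by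
    rw [Ne, ← absNorm_eq_zero_iff, hI]; exact hn
  have le_factors {I : Ideal S} (hI : absNorm I = n) :
      normalizedFactors I ≤ normalizedFactors (span {(n : S)}) := by
    refine (dvd_iff_normalizedFactors_le_normalizedFactors (ne_bot hI) hspan).mp ?_
    rw [dvd_span_singleton, ← hI]
    exact absNorm_mem I
  refine (Set.ncard_le_ncard_of_injOn (fun I => (normalizedFactors I).toFinsupp)
    (t := primesDividingN.finsupp fun P => range (n.factorization (absNorm P).minFac + 1)) ?_ ?_
    (finite_toSet _)).trans ?_
  · intro I (hI : absNorm I = n)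
    rw [mem_coe, mem_finsupp_iff]
    refine ⟨fun P hP => ?_, fun P hP => ?_⟩
    · simp only [Multiset.toFinsupp_support] at hP
      exact Multiset.mem_toFinset.mpr
        (Multiset.mem_of_le (le_factors hI) (Multiset.mem_toFinset.mp hP))
    · rw [Multiset.toFinsupp_apply, mem_range, Nat.lt_succ_iff, ← hI]
      exact count_normalizedFactors_le_factorization I
        (prime_of_normalized_factor P (Multiset.mem_toFinset.mp hP))
  · intro I₁ (h₁ : absNorm I₁ = n) I₂ (h₂ : absNorm I₂ = n) h
    rw [← associated_iff_eq.mp (prod_normalizedFactors (ne_bot h₁)),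
      ← associated_iff_eq.mp (prod_normalizedFactors (ne_bot h₂)),
      Multiset.toFinsupp.injective h]
  · rw [Set.ncard_coe_finset, card_finsupp]
    simp only [card_range]
    refine prod_factorization_minFac_absNorm_add_one_le hn primesDividingN fun P hP => ?_
    have hP := Multiset.mem_toFinset.mp hP
    exact ⟨prime_of_normalized_factor P hP, dvd_of_mem_normalizedFactors hP⟩

end Ideal

section Northcott

variable {F : Type*} [Field F] [NumberField F]

lemma natDegree_minpoly_int_le {x : F} (hx : IsIntegral ℤ x) :
    (minpoly ℤ x).natDegree ≤ finrank ℚ F := by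
  rw [← (minpoly.monic hx).natDegree_map (algebraMap ℤ ℚ),
    ← minpoly.isIntegrallyClosed_eq_field_fractions' ℚ hx]
  exact minpoly.natDegree_le x

lemma abs_coeff_minpoly_int_le {x : F} (hx : IsIntegral ℤ x) {B : ℝ}
    (h : ∀ φ : F →+* ℂ, ‖φ x‖ ≤ B) (i : ℕ) :
    |(minpoly ℤ x).coeff i| ≤
      ⌈max B 1 ^ finrank ℚ F * (finrank ℚ F).choose (finrank ℚ F / 2)⌉₊ := by
  rw [← @Int.cast_le ℝ]
  refine (Eq.trans_le ?_ <| Embeddings.coeff_bdd_of_norm_le h i).trans (Nat.le_ceil _)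
  rw [minpoly.isIntegrallyClosed_eq_field_fractions' ℚ hx, coeff_map, eq_intCast,
    Int.norm_cast_rat, Int.norm_eq_abs, Int.cast_abs]

/-- There are at most `(2M + 1) ^ (d + 1)` integer polynomials of degree at most `d` with
coefficients bounded by `M`, the bound of `Embeddings.coeff_bdd_of_norm_le` on the coefficients
of a minimal polynomial in terms of the conjugates, and each has at most `d` roots. -/
noncomputable def northcottBound (d : ℕ) (B : ℝ) : ℕ :=
  d * (2 * ⌈max B 1 ^ d * d.choose (d / 2)⌉₊ + 1) ^ (d + 1)

theorem ncard_setOf_isIntegral_norm_le (B : ℝ) :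
    {x : F | IsIntegral ℤ x ∧ ∀ φ : F →+* ℂ, ‖φ x‖ ≤ B}.ncard ≤
      northcottBound (finrank ℚ F) B := by
  classical
  set d := finrank ℚ F
  set M : ℕ := ⌈max B 1 ^ d * d.choose (d / 2)⌉₊
  set box := Fintype.piFinset fun _ : Fin (d + 1) => Icc (-(M : ℤ)) M
  have card_box : #box = (2 * M + 1) ^ (d + 1) := by
    simp only [box, Fintype.card_piFinset, Int.card_Icc, prod_const, card_univ, Fintype.card_fin]
    congr 1
    omega
  refine (Set.ncard_le_mul_ncard_of_mapsTo (f := fun x (i : Fin (d + 1)) => (minpoly ℤ x).coeff i)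
    (Embeddings.finite_of_norm_le F ℂ B) box.finite_toSet ?_ d ?_).trans ?_
  · intro x hx
    rw [mem_coe, Fintype.mem_piFinset]
    exact fun i => mem_Icc.mpr (abs_le.mp (abs_coeff_minpoly_int_le hx.1 hx.2 i))
  · intro c _
    rcases Set.eq_empty_or_nonempty
      ({x : F | IsIntegral ℤ x ∧ ∀ φ : F →+* ℂ, ‖φ x‖ ≤ B} ∩
        (fun x (i : Fin (d + 1)) => (minpoly ℤ x).coeff i) ⁻¹' {c})
      with h | ⟨x₀, hx₀, hx₀c⟩
    · simp [h]
    refine (Set.ncard_le_ncard (t := (minpoly ℤ x₀).rootSet F) ?_ (rootSet_finite _ _)).trans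
      ((ncard_rootSet_le _ _).trans (natDegree_minpoly_int_le hx₀.1))
    rintro y ⟨hy, hyc⟩
    have minpoly_eq : minpoly ℤ y = minpoly ℤ x₀ := by
      ext i
      rcases lt_or_ge i (d + 1) with hi | hi
      · exact congrFun (hyc.trans hx₀c.symm) ⟨i, hi⟩
      · rw [coeff_eq_zero_of_natDegree_lt ((natDegree_minpoly_int_le hy.1).trans_lt hi),
          coeff_eq_zero_of_natDegree_lt ((natDegree_minpoly_int_le hx₀.1).trans_lt hi)]
    rw [mem_rootSet, ← minpoly_eq]
    exact ⟨minpoly.ne_zero hy.1, minpoly.aeval ℤ y⟩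
  · rw [Set.ncard_coe_finset, card_box]
    rfl

end Northcott

lemma mul_prod_le_mul_pow_card {ι : Type*} [Fintype ι] [DecidableEq ι] {a : ι → ℝ} {b M : ℝ}
    (ha : ∀ i, 0 ≤ a i) (haM : ∀ i, a i ≤ M) (hb : b ≤ M) (j : ι) :
    b * ∏ i, a i ≤ a j * M ^ Fintype.card ι := by
  have hM : 0 ≤ M := (ha j).trans (haM j)
  have rest : ∏ i ∈ univ.erase j, a i ≤ M ^ (Fintype.card ι - 1) := by
    calc ∏ i ∈ univ.erase j, a i ≤ ∏ _i ∈ univ.erase j, M :=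
          prod_le_prod (fun i _ => ha i) fun i _ => haM i
      _ = M ^ (Fintype.card ι - 1) := by rw [prod_const, card_erase_of_mem (mem_univ j), card_univ]
  calc b * ∏ i, a i = b * (a j * ∏ i ∈ univ.erase j, a i) := by rw [mul_prod_erase _ _ (mem_univ j)]
    _ ≤ M * (a j * M ^ (Fintype.card ι - 1)) :=
        mul_le_mul hb (mul_le_mul_of_nonneg_left rest (ha j))
          (mul_nonneg (ha j) (prod_nonneg fun i _ => ha i)) hM
    _ = a j * M ^ Fintype.card ι := by
        have : Nonempty ι := ⟨j⟩
        rw [mul_left_comm, ← pow_succ', Nat.sub_add_cancel Fintype.card_pos]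

section Conjugates

variable {F : Type*} [Field F] [NumberField F]

lemma prod_norm_embedding_eq_abs_norm (x : F) :
    ∏ φ : F →+* ℂ, ‖φ x‖ = |(Algebra.norm ℚ x : ℝ)| := by
  calc ∏ φ : F →+* ℂ, ‖φ x‖ = ∏ σ : F →ₐ[ℚ] ℂ, ‖σ x‖ :=
        Fintype.prod_equiv (RingHom.equivRatAlgHom F ℂ) _ _
          fun φ => by simp [RingHom.equivRatAlgHom_apply]
    _ = ‖algebraMap ℚ ℂ (Algebra.norm ℚ x)‖ := by
        rw [Algebra.norm_eq_prod_embeddings ℚ ℂ x, norm_prod]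
    _ = |(Algebra.norm ℚ x : ℝ)| := by
        rw [eq_ratCast, ← Complex.ofReal_ratCast, Complex.norm_real, Real.norm_eq_abs]

lemma norm_apply_div_le {x y : F} {B : ℝ} (hx : ∀ ψ : F →+* ℂ, ‖ψ x‖ ≤ B) (φ : F →+* ℂ)
    (hy : ‖φ y‖ ≤ B) : ‖φ (y / x)‖ ≤ B ^ finrank ℚ F / |(Algebra.norm ℚ x : ℝ)| := by
  classical
  rcases eq_or_ne x 0 with rfl | hx0
  · simp
  have key := mul_prod_le_mul_pow_card (fun ψ => norm_nonneg (ψ x)) hx hy φ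
  rw [prod_norm_embedding_eq_abs_norm, Embeddings.card] at key
  have hφx : 0 < ‖φ x‖ := norm_pos_iff.mpr ((map_ne_zero φ).mpr hx0)
  have hN : 0 < |(Algebra.norm ℚ x : ℝ)| := by
    rw [abs_pos, Rat.cast_ne_zero, Ne, Algebra.norm_eq_zero_iff]; exact hx0
  rw [map_div₀, norm_div, div_le_div_iff₀ hφx hN]
  linarith

end Conjugates

section SmallElements

variable (F : Type*) [Field F] [NumberField F]

lemma finite_setOf_norm_embedding_le (B : ℝ) :
    {x : 𝓞 F | ∀ σ : F →+* ℂ, ‖σ x‖ ≤ B}.Finite :=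
  ((Embeddings.finite_of_norm_le F ℂ B).preimage RingOfIntegers.coe_injective.injOn).subset
    fun x hx => ⟨RingOfIntegers.isIntegral_coe x, hx⟩

theorem ncard_setOf_abs_norm_eq_le {n : ℕ} (hn : n ≠ 0) (B : ℝ) :
    {x : 𝓞 F | |Algebra.norm ℚ (x : F)| = (n : ℚ) ∧ ∀ σ : F →+* ℂ, ‖σ x‖ ≤ B}.ncard ≤
      northcottBound (finrank ℚ F) (B ^ finrank ℚ F / n) * #n.divisors ^ finrank ℚ F := by
  set S := {x : 𝓞 F | |Algebra.norm ℚ (x : F)| = (n : ℚ) ∧ ∀ σ : F →+* ℂ, ‖σ x‖ ≤ B}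
  have absNorm_span {x : 𝓞 F} (hx : x ∈ S) : Ideal.absNorm (Ideal.span {x}) = n := by
    rw [Ideal.absNorm_span_singleton, ← Nat.cast_inj (R := ℚ), Nat.cast_natAbs, Int.cast_abs,
      Algebra.coe_norm_int, hx.1]
  refine (Set.ncard_le_mul_ncard_of_mapsTo (f := fun x => Ideal.span {x})
    ((finite_setOf_norm_embedding_le F B).subset fun x hx => hx.2)
    (Ideal.finite_setOfPred_absNorm_eq n) (fun x hx => absNorm_span hx) _ ?_).trans
    (Nat.mul_le_mul_left _ (RingOfIntegers.rank F ▸ Ideal.ncard_setOf_absNorm_eq_le hn))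
  intro I _
  rcases (S ∩ (fun x => Ideal.span {x}) ⁻¹' {I}).eq_empty_or_nonempty with h | ⟨x₀, hx₀, hx₀I⟩
  · simp [h]
  have hx₀0 : (x₀ : F) ≠ 0 := fun h => hn (by simpa [h] using hx₀.1.symm)
  refine (Set.ncard_le_ncard_of_injOn (fun y : 𝓞 F => (y : F) / x₀) ?_ ?_
    (Embeddings.finite_of_norm_le F ℂ _)).trans (ncard_setOf_isIntegral_norm_le (F := F) _)
  · rintro y ⟨hy, hyI⟩
    refine ⟨?_, fun φ => ?_⟩
    · obtain ⟨u, rfl⟩ := Ideal.span_singleton_le_span_singleton.mp (hyI.trans hx₀I.symm).le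
      push_cast
      rw [mul_div_cancel_left₀ _ hx₀0]
      exact RingOfIntegers.isIntegral_coe u
    · have := norm_apply_div_le hx₀.2 φ (hy.2 φ)
      rwa [← Rat.cast_abs, hx₀.1, Rat.cast_natCast] at this
  · exact fun y₁ _ y₂ _ h => RingOfIntegers.coe_injective ((div_left_inj' hx₀0).mp h)

end SmallElements

theorem statement8_general (C : ℝ) (ε : ℝ) (hε : 0 < ε) :
    ∃ C' > (0 : ℝ), ∀ (F : Type) (_ : Field F) (_ : NumberField F),
      Module.finrank ℚ F = 3 → ∀ n : ℕ, 1 ≤ n →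
      letI Sset : Set (NumberField.RingOfIntegers F) :=
        {x | |Algebra.norm ℚ (x : F)| = (n : ℚ) ∧
          ∀ σ : F →+* ℂ, ‖σ x‖ ≤ C * (n : ℝ) ^ ((1 : ℝ) / 3)}
      Sset.Finite ∧ (Sset.ncard : ℝ) ≤ C' * (n : ℝ) ^ ε := by
  obtain ⟨A, hA, hdiv⟩ := Nat.exists_card_divisors_le_mul_rpow (div_pos hε three_pos)
  refine ⟨northcottBound 3 (C ^ 3) * A ^ 3, by unfold northcottBound; positivity, ?_⟩
  intro F _ _ h3 n hn
  have hn0 : (0 : ℝ) < n := by exact_mod_cast hn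
  have cube : (C * (n : ℝ) ^ ((1 : ℝ) / 3)) ^ 3 / n = C ^ 3 := by
    rw [mul_pow, ← Real.rpow_natCast ((n : ℝ) ^ _), ← Real.rpow_mul hn0.le]
    norm_num
    field_simp
  refine ⟨(finite_setOf_norm_embedding_le F _).subset fun x hx => hx.2, ?_⟩
  have count := ncard_setOf_abs_norm_eq_le F (n := n) (by omega) (C * (n : ℝ) ^ ((1 : ℝ) / 3))
  rw [h3, cube] at count
  calc _ ≤ (northcottBound 3 (C ^ 3) : ℝ) * (#n.divisors : ℝ) ^ 3 := by exact_mod_cast count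
    _ ≤ northcottBound 3 (C ^ 3) * (A * (n : ℝ) ^ (ε / 3)) ^ 3 := by gcongr; exact hdiv n
    _ = northcottBound 3 (C ^ 3) * A ^ 3 * (n : ℝ) ^ ε := by
        rw [mul_pow, ← Real.rpow_natCast ((n : ℝ) ^ _), ← Real.rpow_mul hn0.le]
        ring_nf

/-- for every `C > 0` and `ε > 0` there is `C' > 0`, independent of the cubic
number field `F`, such that for every `n ≥ 1` the number of `x ∈ O_F` with
`|N_{F/ℚ}(x)| = n` and `|σ(x)| ≤ C·n^{1/3}` for every embedding `σ : F → ℂ` is at most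
`C'·n^ε`. -/
theorem statement8 (C : ℝ) (hC : 0 < C) (ε : ℝ) (hε : 0 < ε) :
    ∃ C' > (0 : ℝ), ∀ (F : Type) (_ : Field F) (_ : NumberField F),
      Module.finrank ℚ F = 3 → ∀ n : ℕ, 1 ≤ n →
      letI Sset : Set (NumberField.RingOfIntegers F) :=
        {x | |Algebra.norm ℚ (x : F)| = (n : ℚ) ∧
          ∀ σ : F →+* ℂ, ‖σ x‖ ≤ C * (n : ℝ) ^ ((1 : ℝ) / 3)}
      Sset.Finite ∧ (Sset.ncard : ℝ) ≤ C' * (n : ℝ) ^ ε :=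
  statement8_general C ε hε
end

section
/- Let g ∈ SL_3(ℝ) have Iwasawa decomposition g = n·a·k with n ∈ N, a ∈ A, k ∈ SO(3). Then for all H₁, H₂ ∈ 𝔞, the function s ↦ ⟨H₁, A(g·exp(sH₂))⟩ is differentiable at s = 0 and its derivative there equals ⟨H₁, k H₂ k⁻¹⟩, i.e. (d/ds)|_{s=0} ⟨H₁, A(g exp(sH₂))⟩ = ⟨H₁, Ad(k)H₂⟩. -/
open scoped Matrix

noncomputable section

/-- Real 3×3 matrices. -/
abbrev M3 : Type := Matrix (Fin 3) (Fin 3) ℝ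

/-- `n ∈ N`: upper triangular unipotent. -/
def isUnip (n : M3) : Prop :=
  (∀ i j : Fin 3, (j : ℕ) < (i : ℕ) → n i j = 0) ∧ ∀ i, n i i = 1

/-- `a ∈ A`: diagonal with positive entries and determinant 1. -/
def isPosDiag (a : M3) : Prop :=
  (∀ i j : Fin 3, i ≠ j → a i j = 0) ∧ (∀ i, 0 < a i i) ∧ a.det = 1

/-- `k ∈ K = SO(3)`. -/
def isSO (k : M3) : Prop := k * kᵀ = 1 ∧ k.det = 1

/-- `H ∈ 𝔞`: traceless diagonal. -/
def isTDiag (H : M3) : Prop :=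
  (∀ i j : Fin 3, i ≠ j → H i j = 0) ∧ H.trace = 0

/-- `m ∈ M`: diagonal with `±1` entries and determinant 1 (the centralizer of `A` in `K`). -/
def isMgrp (m : M3) : Prop :=
  (∀ i j : Fin 3, i ≠ j → m i j = 0) ∧ (∀ i, m i i = 1 ∨ m i i = -1) ∧ m.det = 1

/-- The Killing form `⟨X, Y⟩ = 6·tr(XY)` on `sl₃(ℝ)`. -/
def killing (X Y : M3) : ℝ := 6 * (X * Y).trace

/-- `IwaA` is the Iwasawa `𝔞`-coordinate: for every `g ∈ SL₃(ℝ)`, `IwaA g ∈ 𝔞` and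
`g = n·exp(IwaA g)·k` for some `n ∈ N`, `k ∈ SO(3)`. -/
def IsIwasawaA (IwaA : M3 → M3) : Prop :=
  ∀ g : M3, g.det = 1 → isTDiag (IwaA g) ∧
    ∃ n k : M3, isUnip n ∧ isSO k ∧ g = n * NormedSpace.exp (IwaA g) * k

/-!
If `h = n·exp(A)·k` with `n` unipotent upper triangular, `A` diagonal and `k` orthogonal, then
`h hᵀ = n·exp(2A)·nᵀ`, and conjugation by `n` does not change the lower-right `1 × 1` and `2 × 2`
minors of a matrix. So these minors of `h hᵀ` are `e^{2A₂₂}` and `e^{2(A₁₁ + A₂₂)}` (indices from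
`0`), and `⟨H₁, A(h)⟩` is a fixed linear combination of their logarithms.

For `h = g·exp(sH₂) = n·a·(k·exp(sH₂))` the same minors are, up to constant factors coming from `a`,
those of `k·exp(2sH₂)·kᵀ`, which is `1` at `s = 0` with derivative `2·k H₂ kᵀ`. Their logarithmic
derivatives at `0` are therefore `2(kH₂kᵀ)₂₂` and `2((kH₂kᵀ)₁₁ + (kH₂kᵀ)₂₂)`, and since `kH₂kᵀ` is
traceless these recombine to `⟨H₁, kH₂k⁻¹⟩`.
-/
open Matrix

section Diagonal

variable {ι : Type*} [Fintype ι] [DecidableEq ι] {H : Matrix ι ι ℝ}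

theorem Matrix.IsDiag.exp_eq_diagonal (hH : H.IsDiag) :
    NormedSpace.exp H = diagonal fun i => Real.exp (H i i) := by
  conv_lhs => rw [← hH.diagonal_diag]
  rw [exp_diagonal, Pi.exp_def, Real.exp_eq_exp_ℝ]
  rfl

theorem Matrix.IsDiag.det_exp (hH : H.IsDiag) : (NormedSpace.exp H).det = Real.exp H.trace := by
  rw [hH.exp_eq_diagonal, det_diagonal, ← Real.exp_sum]
  rfl

theorem Matrix.mul_diagonal_mul_transpose_apply (k : Matrix ι ι ℝ) (d : ι → ℝ) (i j : ι) :
    (k * diagonal d * kᵀ) i j = ∑ m, k i m * d m * k j m := by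
  rw [mul_apply]
  simp only [mul_diagonal, transpose_apply]

theorem Matrix.IsDiag.gram_mul_exp_smul (hH : H.IsDiag) (k : Matrix ι ι ℝ) (s : ℝ) :
    k * NormedSpace.exp (s • H) * (k * NormedSpace.exp (s • H))ᵀ =
      k * diagonal (fun m => Real.exp (s * (2 * H m m))) * kᵀ := by
  have hsq : (fun m => Real.exp (s * H m m) * Real.exp (s * H m m)) =
      fun m => Real.exp (s * (2 * H m m)) := by
    funext m; rw [← Real.exp_add]; ring_nf
  rw [(hH.smul s).exp_eq_diagonal, transpose_mul, diagonal_transpose, mul_assoc, mul_assoc,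
    ← mul_assoc (diagonal _), diagonal_mul_diagonal]
  simp only [smul_apply, smul_eq_mul, hsq]

theorem Matrix.IsDiag.hasDerivAt_gram_mul_exp_smul (hH : H.IsDiag) (k : Matrix ι ι ℝ) (i j : ι) :
    HasDerivAt (fun s : ℝ => (k * NormedSpace.exp (s • H) * (k * NormedSpace.exp (s • H))ᵀ) i j)
      (2 * (k * H * kᵀ) i j) 0 := by
  have hterm (m : ι) : HasDerivAt (fun s : ℝ => k i m * Real.exp (s * (2 * H m m)) * k j m)
      (k i m * (2 * H m m) * k j m) 0 := by
    simpa using ((((hasDerivAt_id (0 : ℝ)).mul_const (2 * H m m)).exp).const_mul (k i m)).mul_const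
      (k j m)
  have hvalue : 2 * (k * H * kᵀ) i j = ∑ m, k i m * (2 * H m m) * k j m := by
    conv_lhs => rw [← hH.diagonal_diag]
    rw [mul_diagonal_mul_transpose_apply, Finset.mul_sum]
    exact Finset.sum_congr rfl fun m _ => by rw [diag_apply]; ring
  simp_rw [hH.gram_mul_exp_smul k, mul_diagonal_mul_transpose_apply, hvalue]
  exact HasDerivAt.fun_sum fun m _ => hterm m

end Diagonal

def lowerMinor₁ (P : M3) : ℝ := P 2 2

def lowerMinor₂ (P : M3) : ℝ := P 1 1 * P 2 2 - P 1 2 * P 2 1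

section LowerMinors

variable {n d : M3}

theorem lowerMinor₁_gram_unip_mul (hn : isUnip n) (hd : d.IsDiag) (q : M3) :
    lowerMinor₁ (n * d * q * (n * d * q)ᵀ) = d 2 2 ^ 2 * lowerMinor₁ (q * qᵀ) := by
  obtain ⟨hlower, hone⟩ := hn
  simp [lowerMinor₁, mul_apply, Fin.sum_univ_three, hlower 2 0 (by decide), hlower 2 1 (by decide),
    hone 2, hd (i := 2) (j := 0) (by decide), hd (i := 2) (j := 1) (by decide)]
  ring

theorem lowerMinor₂_gram_unip_mul (hn : isUnip n) (hd : d.IsDiag) (q : M3) :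
    lowerMinor₂ (n * d * q * (n * d * q)ᵀ) = (d 1 1 * d 2 2) ^ 2 * lowerMinor₂ (q * qᵀ) := by
  obtain ⟨hlower, hone⟩ := hn
  simp [lowerMinor₂, mul_apply, Fin.sum_univ_three, hlower 2 0 (by decide), hlower 2 1 (by decide),
    hlower 1 0 (by decide), hone 1, hone 2, hd (i := 2) (j := 0) (by decide),
    hd (i := 2) (j := 1) (by decide), hd (i := 1) (j := 0) (by decide),
    hd (i := 1) (j := 2) (by decide)]
  ring

end LowerMinors

theorem log_lowerMinors_gram_of_eq_unip_mul_exp_mul {h n A k : M3} (hn : isUnip n) (hA : A.IsDiag)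
    (hk : k * kᵀ = 1) (hh : h = n * NormedSpace.exp A * k) :
    Real.log (lowerMinor₁ (h * hᵀ)) = 2 * A 2 2 ∧
      Real.log (lowerMinor₂ (h * hᵀ)) = 2 * (A 1 1 + A 2 2) := by
  have hexp : (NormedSpace.exp A).IsDiag := hA.exp_eq_diagonal ▸ isDiag_diagonal _
  have hexp_apply (i : Fin 3) : NormedSpace.exp A i i = Real.exp (A i i) := by
    rw [hA.exp_eq_diagonal, diagonal_apply_eq]
  subst hh
  rw [lowerMinor₁_gram_unip_mul hn hexp, lowerMinor₂_gram_unip_mul hn hexp, hk]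
  simp only [lowerMinor₁, lowerMinor₂, hexp_apply, ← Real.exp_add]
  constructor <;> simp [one_apply, Real.log_pow]

theorem killing_eq_of_isDiag_of_trace_eq_zero {H X : M3} (hH : H.IsDiag) (hX : X.trace = 0) :
    killing H X = 6 * ((H 1 1 - H 0 0) * X 1 1 + (H 2 2 - H 0 0) * X 2 2) := by
  rw [trace_fin_three] at hX
  conv_lhs => rw [← hH.diagonal_diag]
  simp only [killing, diagonal_mul, trace_fin_three, diag_apply]
  linear_combination 6 * H 0 0 * hX

theorem killing_iwasawaA_eq {IwaA : M3 → M3} (hIwa : IsIwasawaA IwaA) {h H : M3} (hh : h.det = 1)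
    (hH : H.IsDiag) :
    killing H (IwaA h) = 3 * ((H 2 2 - H 1 1) * Real.log (lowerMinor₁ (h * hᵀ)) +
      (H 1 1 - H 0 0) * Real.log (lowerMinor₂ (h * hᵀ))) := by
  obtain ⟨⟨hA, htr⟩, n, k, hn, hk, hdec⟩ := hIwa h hh
  obtain ⟨h₁, h₂⟩ := log_lowerMinors_gram_of_eq_unip_mul_exp_mul hn hA hk.1 hdec
  rw [killing_eq_of_isDiag_of_trace_eq_zero hH htr, h₁, h₂]
  ring

theorem hasDerivAt_log_mul_lowerMinor₁ {P : ℝ → M3} {X : M3}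
    (hP : ∀ i j, HasDerivAt (fun s => P s i j) (X i j) 0) (hP0 : P 0 = 1) {c : ℝ} (hc : c ≠ 0) :
    HasDerivAt (fun s => Real.log (c * lowerMinor₁ (P s))) (X 2 2) 0 := by
  refine (((hP 2 2).const_mul c).log (by simp [hP0, hc])).congr_deriv ?_
  simp only [hP0, one_apply_eq]
  field_simp

theorem hasDerivAt_log_mul_lowerMinor₂ {P : ℝ → M3} {X : M3}
    (hP : ∀ i j, HasDerivAt (fun s => P s i j) (X i j) 0) (hP0 : P 0 = 1) {c : ℝ} (hc : c ≠ 0) :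
    HasDerivAt (fun s => Real.log (c * lowerMinor₂ (P s))) (X 1 1 + X 2 2) 0 := by
  have h := ((((hP 1 1).mul (hP 2 2)).sub ((hP 1 2).mul (hP 2 1))).const_mul c).log
    (by simp [hP0, hc])
  refine h.congr_deriv ?_
  simp [hP0, hc]

/-- if `g = n·a·k` is the Iwasawa decomposition of `g ∈ SL₃(ℝ)`, then for
`H₁, H₂ ∈ 𝔞` the function `s ↦ ⟨H₁, A(g·exp(sH₂))⟩` is differentiable at `s = 0` with
derivative `⟨H₁, Ad(k)H₂⟩ = ⟨H₁, k H₂ k⁻¹⟩`. -/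
theorem statement9
    (IwaA : M3 → M3) (hIwa : IsIwasawaA IwaA)
    (g n a k : M3) (hg : g.det = 1)
    (hn : isUnip n) (ha : isPosDiag a) (hk : isSO k) (hdec : g = n * a * k)
    (H₁ H₂ : M3) (hH₁ : isTDiag H₁) (hH₂ : isTDiag H₂) :
    HasDerivAt (fun s : ℝ => killing H₁ (IwaA (g * NormedSpace.exp (s • H₂))))
      (killing H₁ (k * H₂ * k⁻¹)) 0 := by
  have hH₂d : H₂.IsDiag := hH₂.1
  have hdet (s : ℝ) : (g * NormedSpace.exp (s • H₂)).det = 1 := by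
    rw [det_mul, hg, (hH₂d.smul s).det_exp, trace_smul, hH₂.2, smul_zero, Real.exp_zero, one_mul]
  set P : ℝ → M3 := fun s => k * NormedSpace.exp (s • H₂) * (k * NormedSpace.exp (s • H₂))ᵀ
  have hP0 : P 0 = 1 := by simp [P, hk.1]
  have hf : (fun s => killing H₁ (IwaA (g * NormedSpace.exp (s • H₂)))) = fun s =>
      3 * ((H₁ 2 2 - H₁ 1 1) * Real.log (a 2 2 ^ 2 * lowerMinor₁ (P s)) +
        (H₁ 1 1 - H₁ 0 0) * Real.log ((a 1 1 * a 2 2) ^ 2 * lowerMinor₂ (P s))) := by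
    funext s
    rw [killing_iwasawaA_eq hIwa (hdet s) hH₁.1, hdec, mul_assoc (n * a),
      lowerMinor₁_gram_unip_mul hn ha.1, lowerMinor₂_gram_unip_mul hn ha.1]
  have htr : (k * H₂ * kᵀ).trace = 0 := by
    rw [trace_mul_cycle, mul_eq_one_comm.mp hk.1, one_mul, hH₂.2]
  rw [hf, inv_eq_right_inv hk.1, killing_eq_of_isDiag_of_trace_eq_zero hH₁.1 htr]
  have ha₁ : a 1 1 ≠ 0 := (ha.2.1 1).ne'
  have ha₂ : a 2 2 ≠ 0 := (ha.2.1 2).ne'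
  have hP := hH₂d.hasDerivAt_gram_mul_exp_smul k
  have h₁ := hasDerivAt_log_mul_lowerMinor₁ hP hP0 (c := a 2 2 ^ 2) (by positivity)
  have h₂ := hasDerivAt_log_mul_lowerMinor₂ hP hP0 (c := (a 1 1 * a 2 2) ^ 2) (by positivity)
  exact (((h₁.const_mul (H₁ 2 2 - H₁ 1 1)).add (h₂.const_mul (H₁ 1 1 - H₁ 0 0))).const_mul 3
    ).congr_deriv (by ring)

end
end
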